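/- arXiv:2008.12826 — 3 statements merged into one kernel-verified Lean document; each statement's English description precedes it below -/
import Mathlib

section
/- There do not exist F, M ∈ Λ with F + M = C, F·M = 1, F² ≥ 1 and M² ≥ 1. -/
/-!
For `u` with `u² > 0` the Lorentzian form satisfies the reverse Cauchy–Schwarz inequality
`u² v² ≤ (u·v)²`: the vector `w = u₀ v - v₀ u` has no time component, so `w² ≤ 0`, and
`u₀² ((u·v)² - u² v²) = u² (-w²) + (u₀ (u·v) - v₀ u²)²`.
A splitting `C = F + M` with `F·M = 1` and `F², M² ≥ 1` therefore has `F² M² ≤ 1`, i.e.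
`F² = M² = 1`, whence `C² = 1 + 2 + 1 = 4 ≠ 19`.
-/

namespace CubicSurfaceLattice

/-- The Minkowski bilinear form of signature `(1,6)` on `Λ = ℤ⁷`. -/
def B (u v : Fin 7 → ℤ) : ℤ := u 0 * v 0 - ∑ i : Fin 6, u i.succ * v i.succ

/-- The canonical class `K = -3e₀ + e₁ + ⋯ + e₆` of the cubic surface. -/
def K : Fin 7 → ℤ := fun i => if i = 0 then -3 else 1

/-- The curve class `C = 13e₀ - 5(e₁ + ⋯ + e₆)`. -/
def C : Fin 7 → ℤ := fun i => if i = 0 then 13 else -5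

section LorentzForm

variable {R : Type*} [CommRing R] {n : ℕ}

def lorentzForm (u v : Fin (n + 1) → R) : R := u 0 * v 0 - ∑ i : Fin n, u i.succ * v i.succ

theorem lorentzForm_comm (u v : Fin (n + 1) → R) : lorentzForm u v = lorentzForm v u := by
  simp only [lorentzForm, mul_comm]

theorem lorentzForm_add_self (u v : Fin (n + 1) → R) :
    lorentzForm (u + v) (u + v) = lorentzForm u u + 2 * lorentzForm u v + lorentzForm v v := by
  have hcomm := lorentzForm_comm v u
  simp only [lorentzForm, Pi.add_apply, add_mul, mul_add, Finset.sum_add_distrib] at hcomm ⊢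
  linear_combination hcomm

theorem lorentzForm_mul_le_sq [LinearOrder R] [IsStrictOrderedRing R] {u : Fin (n + 1) → R}
    (hu : 0 < lorentzForm u u) (v : Fin (n + 1) → R) : lorentzForm u u * lorentzForm v v ≤ lorentzForm u v ^ 2 := by
  set a := u 0
  set b := v 0
  set P := ∑ i : Fin n, u i.succ * u i.succ
  set Q := ∑ i : Fin n, v i.succ * v i.succ
  set S := ∑ i : Fin n, u i.succ * v i.succ
  have hP : 0 ≤ P := Finset.sum_nonneg fun i _ => mul_self_nonneg _
  -- the right-hand side is `-(a • v - b • u)²`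
  have hW : 0 ≤ a ^ 2 * Q - 2 * a * b * S + b ^ 2 * P := by
    have hsq : ∑ i : Fin n, (a * v i.succ - b * u i.succ) ^ 2
        = a ^ 2 * Q - 2 * a * b * S + b ^ 2 * P := by
      simp only [P, Q, S, Finset.mul_sum, ← Finset.sum_sub_distrib, ← Finset.sum_add_distrib]
      exact Finset.sum_congr rfl fun i _ => by ring
    exact hsq ▸ Finset.sum_nonneg fun i _ => sq_nonneg _
  have ha : 0 < a ^ 2 := by
    have : P < a ^ 2 := by simpa [lorentzForm, sq, sub_pos] using hu
    linarith
  have key : a ^ 2 * (lorentzForm u v ^ 2 - lorentzForm u u * lorentzForm v v)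
      = lorentzForm u u * (a ^ 2 * Q - 2 * a * b * S + b ^ 2 * P)
        + (a * lorentzForm u v - b * lorentzForm u u) ^ 2 := by
    simp only [lorentzForm]
    ring
  have : 0 ≤ a ^ 2 * (lorentzForm u v ^ 2 - lorentzForm u u * lorentzForm v v) := by
    rw [key]; positivity
  linarith [nonneg_of_mul_nonneg_right this ha]

end LorentzForm

theorem B_eq_lorentzForm : B = lorentzForm := rfl

theorem B_C_self : B C C = 19 := by decide

/-- There is no decomposition C = F + M with F·M = 1, F² ≥ 1 and M² ≥ 1. -/
theorem no_splitting_both_positive :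
    ¬ ∃ F M : Fin 7 → ℤ, F + M = C ∧ B F M = 1 ∧ 1 ≤ B F F ∧ 1 ≤ B M M := by
  rintro ⟨F, M, hsum, hFM, hF, hM⟩
  rw [B_eq_lorentzForm] at *
  have hC : lorentzForm F F + 2 * lorentzForm F M + lorentzForm M M = 19 := by
    rw [← lorentzForm_add_self, hsum, ← B_eq_lorentzForm, B_C_self]
  have hCS := lorentzForm_mul_le_sq (u := F) (by omega) M
  rw [hFM] at hC hCS
  nlinarith [mul_nonneg (sub_nonneg.2 hF) (sub_nonneg.2 hM)]

end CubicSurfaceLattice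
end

section
/- For every F ∈ Λ with F² = −1 and F·K = −1, one has F·(C − F) ≠ 1. -/
/-! Since `C + 5K = -2e₀`, every class `F` with `F² = -1` and `F·K = -1` has
`F·(C - F) = F·C + 1 = 6 - 2F₀`, which is even. -/

namespace CubicSurfaceLattice

theorem B_sub_right (u v w : Fin 7 → ℤ) : B u (v - w) = B u v - B u w := by
  simp only [B, Pi.sub_apply, mul_sub, Finset.sum_sub_distrib]
  ring

theorem B_C (u : Fin 7 → ℤ) : B u C = -5 * B u K - 2 * u 0 := by
  simp only [B, C, K, Fin.succ_ne_zero, ↓reduceIte, ← Finset.sum_mul]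
  ring

/-- No line class F (F² = -1, F·K = -1) satisfies F·(C - F) = 1. -/
theorem no_line_splitting :
    ∀ F : Fin 7 → ℤ, B F F = -1 → B F K = -1 → B F (C - F) ≠ 1 := by
  intro F hFF hFK
  rw [B_sub_right, B_C, hFF, hFK]
  omega

end CubicSurfaceLattice
end

section
/- For every F ∈ Λ, the integer F·(C − F) is even. In particular, there is no decomposition C = F + M in Λ with F·M = 1. -/
/-! All coordinates of `C` are odd, i.e. `C ≡ K (mod 2)` is a characteristic vector of `Λ`.
For odd `c` the integer `a * (c - a)` is even, so `F·(C - F)` is even coordinatewise;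
an odd value `F·M = 1` with `M = C - F` is therefore impossible. -/

namespace CubicSurfaceLattice

lemma even_mul_sub_self_of_odd {c : ℤ} (hc : Odd c) (a : ℤ) : Even (a * (c - a)) := by
  rcases Int.even_or_odd a with ha | ha
  · exact ha.mul_right _
  · exact (hc.sub_odd ha).mul_left _

lemma even_B_sub_self_of_odd {c : Fin 7 → ℤ} (hc : ∀ i, Odd (c i)) (F : Fin 7 → ℤ) :
    Even (B F (c - F)) :=
  (even_mul_sub_self_of_odd (hc 0) _).sub
    (Finset.even_sum _ fun i _ => even_mul_sub_self_of_odd (hc i.succ) _)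

lemma odd_C (i : Fin 7) : Odd (C i) := by
  unfold C
  split_ifs
  exacts [⟨6, rfl⟩, ⟨-3, rfl⟩]

/-- F·(C - F) is even for every F ∈ Λ; in particular there is no decomposition
C = F + M with F·M = 1. -/
theorem intersection_with_complement_even :
    (∀ F : Fin 7 → ℤ, Even (B F (C - F))) ∧
      ¬ ∃ F M : Fin 7 → ℤ, F + M = C ∧ B F M = 1 := by
  refine ⟨even_B_sub_self_of_odd odd_C, ?_⟩
  rintro ⟨F, M, hFM, hBFM⟩
  obtain rfl : M = C - F := by rw [← hFM, add_sub_cancel_left]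
  exact Int.not_even_one (hBFM ▸ even_B_sub_self_of_odd odd_C F)

end CubicSurfaceLattice
end
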